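/- Let d ≥ 1, K_1 > 0, K_4 > 0, B ≥ 0, δ ∈ (0, 1/2), κ > 0 and γ ∈ (0, 2κ − δ) (in particular 2κ > δ). Let G : ℝ^d × S^d → ℝ satisfy degenerate ellipticity (Γ ≥ Γ′ implies G(p,Γ) ≤ G(p,Γ′)) and the growth bound |G(p,Γ)| ≤ K_1(1 + B + |p| + ‖Γ‖), and let ψ : ℝ^d → ℝ satisfy sup_{y ∈ ℝ^d} |ψ(y)| ≤ B. Then there exist C > 0 and h_4 ∈ (0,1], depending only on d, K_1, K_4, δ, γ, κ, such that for all h ∈ (0, h_4] and all x ∈ ℝ^d, Q := sup_{(p,Γ) ∈ D_{h,δ}} inf_{w ∈ X_{h,κ}} [ ψ(x + √h w) − √h wᵀp − (h/2) wᵀΓw − h G(p,Γ) ] satisfies Q ≤ (1 + K_1 h) B + C h. -/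

import Mathlib

/-!
Fix `(p, Γ) ∈ D_{h,δ}` and let `λ ≥ 0` be the maximum of `wᵀΓw` over the unit ball, so that
`Γ ≤ λ I`. Degenerate ellipticity and the growth bound give `-G(p,Γ) ≤ K₁(1 + B + |p| + λ)`,
and it remains to find `w ∈ X_{h,κ}` whose linear and quadratic terms absorb `hK₁(|p| + λ)`.
If `|p| ≤ λ`, take `w = ±h^{-κ} v` along a maximising direction `v`, with the sign making
`wᵀp ≥ 0`: the term `(h/2) h^{-2κ} λ` beats `2hK₁λ` once `h^{-κ} ≥ 4K₁`. If `|p| > λ`, take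
`w = 4K₁√h p/|p|`: then `√h wᵀp = 4K₁h|p|`, while the quadratic term costs at most
`8K₁²K₄h^{2-δ} ≤ 8K₁²K₄h`.
-/

noncomputable section

/-- Euclidean space `ℝ^d`. -/
abbrev Ed (d : ℕ) := EuclideanSpace ℝ (Fin d)

/-- The `ℓ²`-operator norm of a matrix. -/
def opN {d : ℕ} (Γ : Matrix (Fin d) (Fin d) ℝ) : ℝ :=
  ‖Matrix.toEuclideanCLM (𝕜 := ℝ) Γ‖

/-- Euclidean inner product `pᵀ w`. -/
def dotp {d : ℕ} (p w : Ed d) : ℝ := ∑ i, p i * w i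

/-- Quadratic form `wᵀ Γ w`. -/
def quadForm {d : ℕ} (Γ : Matrix (Fin d) (Fin d) ℝ) (w : Ed d) : ℝ :=
  ∑ i, ∑ j, w i * Γ i j * w j

/-- The Hessian matrix `D²φ(x)`. -/
def hess {d : ℕ} (φ : Ed d → ℝ) (x : Ed d) : Matrix (Fin d) (Fin d) ℝ :=
  Matrix.of fun i j =>
    iteratedFDeriv ℝ 2 φ x ![EuclideanSpace.single i 1, EuclideanSpace.single j 1]

/-- First-order partial derivative in direction `i`. -/
def pDeriv {d : ℕ} (i : Fin d) (φ : Ed d → ℝ) : Ed d → ℝ :=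
  fun x => fderiv ℝ φ x (EuclideanSpace.single i 1)

/-- The multiindex partial derivative `D^α φ`. -/
def mDeriv {d : ℕ} (α : Fin d → ℕ) (φ : Ed d → ℝ) : Ed d → ℝ :=
  (((List.finRange d).flatMap fun i => List.replicate (α i) i).foldr pDeriv φ)

/-- The finite set of multiindices `α` with `|α|₁ ≤ k`. -/
def multiIdx (d k : ℕ) : Finset (Fin d → ℕ) :=
  (Fintype.piFinset fun _ : Fin d => Finset.range (k + 1)).filter fun α => ∑ i, α i ≤ k

/-- `D_{h,δ} = {(p,Γ) ∈ ℝ^d × S^d : |p| ≤ K₄ h^{-δ}, ‖Γ‖ ≤ K₄ h^{-δ}}`. -/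
def Dset (d : ℕ) (K4 h δ : ℝ) : Set (Ed d × Matrix (Fin d) (Fin d) ℝ) :=
  {pΓ | pΓ.2.IsSymm ∧ ‖pΓ.1‖ ≤ K4 * h ^ (-δ) ∧ opN pΓ.2 ≤ K4 * h ^ (-δ)}

/-- `X_{h,κ} = {w ∈ ℝ^d : |w| ≤ h^{-κ}}`. -/
def Xset (d : ℕ) (h κ : ℝ) : Set (Ed d) := {w | ‖w‖ ≤ h ^ (-κ)}

end

open Set
open scoped RealInnerProductSpace Matrix

section QuadraticForm

variable {d : ℕ}

lemma dotp_eq_inner (p w : Ed d) : dotp p w = ⟪p, w⟫ := by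
  simp [dotp, PiLp.inner_apply, mul_comm]

lemma dotp_smul_left (c : ℝ) (w p : Ed d) : dotp (c • w) p = c * dotp w p := by
  rw [dotp_eq_inner, dotp_eq_inner, real_inner_smul_left]

lemma dotp_self (p : Ed d) : dotp p p = ‖p‖ ^ 2 := by
  rw [dotp_eq_inner, real_inner_self_eq_norm_sq]

lemma quadForm_eq_inner (Γ : Matrix (Fin d) (Fin d) ℝ) (w : Ed d) :
    quadForm Γ w = ⟪w, Matrix.toEuclideanCLM (𝕜 := ℝ) Γ w⟫ := by
  simp only [quadForm, PiLp.inner_apply, RCLike.inner_apply, conj_trivial]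
  refine Finset.sum_congr rfl fun i _ => ?_
  change _ = (∑ j, Γ i j * w j) * w i
  rw [Finset.sum_mul]
  exact Finset.sum_congr rfl fun j _ => by ring

lemma quadForm_eq_dotProduct_mulVec (Γ : Matrix (Fin d) (Fin d) ℝ) (w : Ed d) :
    quadForm Γ w = w.ofLp ⬝ᵥ Γ *ᵥ w.ofLp := by
  simp only [quadForm, dotProduct, Matrix.mulVec, Finset.mul_sum, mul_assoc]

lemma quadForm_smul (Γ : Matrix (Fin d) (Fin d) ℝ) (c : ℝ) (w : Ed d) :
    quadForm Γ (c • w) = c ^ 2 * quadForm Γ w := by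
  simp only [quadForm, PiLp.smul_apply, smul_eq_mul, Finset.mul_sum]
  exact Finset.sum_congr rfl fun i _ => Finset.sum_congr rfl fun j _ => by ring

lemma abs_quadForm_le (Γ : Matrix (Fin d) (Fin d) ℝ) (w : Ed d) :
    |quadForm Γ w| ≤ opN Γ * ‖w‖ ^ 2 := by
  rw [quadForm_eq_inner]
  calc |⟪w, Matrix.toEuclideanCLM (𝕜 := ℝ) Γ w⟫|
      ≤ ‖w‖ * ‖Matrix.toEuclideanCLM (𝕜 := ℝ) Γ w‖ := abs_real_inner_le_norm _ _
    _ ≤ ‖w‖ * (opN Γ * ‖w‖) := by gcongr; exact ContinuousLinearMap.le_opNorm _ w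
    _ = opN Γ * ‖w‖ ^ 2 := by ring

lemma continuous_quadForm (Γ : Matrix (Fin d) (Fin d) ℝ) : Continuous (quadForm Γ) := by
  simp_rw [funext (quadForm_eq_inner Γ)]
  exact continuous_id.inner (Matrix.toEuclideanCLM (𝕜 := ℝ) Γ).continuous

lemma exists_quadForm_le_mul_norm_sq (Γ : Matrix (Fin d) (Fin d) ℝ) :
    ∃ v : Ed d, ‖v‖ ≤ 1 ∧ 0 ≤ quadForm Γ v ∧ ∀ y, quadForm Γ y ≤ quadForm Γ v * ‖y‖ ^ 2 := by
  obtain ⟨v, hv, hmax⟩ := (isCompact_closedBall (0 : Ed d) 1).exists_isMaxOn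
    (Metric.nonempty_closedBall.2 zero_le_one) (continuous_quadForm Γ).continuousOn
  have hv1 : ‖v‖ ≤ 1 := by simpa using hv
  have hmax' : ∀ u : Ed d, ‖u‖ ≤ 1 → quadForm Γ u ≤ quadForm Γ v :=
    fun u hu => hmax (by simpa using hu)
  refine ⟨v, hv1, ?_, fun y => ?_⟩
  · simpa [quadForm] using hmax' 0 (by simp)
  rcases eq_or_ne y 0 with rfl | hy
  · simp [quadForm]
  have hny : 0 < ‖y‖ := norm_pos_iff.2 hy
  calc quadForm Γ y = quadForm Γ (‖y‖ • ‖y‖⁻¹ • y) := by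
        rw [smul_smul, mul_inv_cancel₀ hny.ne', one_smul]
    _ = ‖y‖ ^ 2 * quadForm Γ (‖y‖⁻¹ • y) := quadForm_smul Γ _ _
    _ ≤ ‖y‖ ^ 2 * quadForm Γ v := by
        gcongr
        exact hmax' _ (by rw [norm_smul, norm_inv, norm_norm, inv_mul_cancel₀ hny.ne'])
    _ = quadForm Γ v * ‖y‖ ^ 2 := mul_comm _ _

lemma posSemidef_smul_one_sub {Γ : Matrix (Fin d) (Fin d) ℝ} (hΓ : Γ.IsSymm) {M : ℝ}
    (hM : ∀ y, quadForm Γ y ≤ M * ‖y‖ ^ 2) :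
    (M • (1 : Matrix (Fin d) (Fin d) ℝ) - Γ).PosSemidef := by
  rw [Matrix.posSemidef_iff_dotProduct_mulVec, Matrix.isHermitian_iff_isSymm]
  refine ⟨(Matrix.isSymm_one.smul M).sub hΓ, fun x => ?_⟩
  have hx := hM (WithLp.toLp 2 x)
  rw [quadForm_eq_dotProduct_mulVec, EuclideanSpace.norm_sq_eq] at hx
  simp only [Real.norm_eq_abs, sq_abs] at hx
  rw [star_trivial, Matrix.sub_mulVec, dotProduct_sub, Matrix.smul_mulVec, Matrix.one_mulVec,
    dotProduct_smul, smul_eq_mul]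
  simp only [dotProduct, ← sq] at hx ⊢
  linarith

lemma opN_smul_one_le {M : ℝ} (hM : 0 ≤ M) : opN (M • (1 : Matrix (Fin d) (Fin d) ℝ)) ≤ M := by
  unfold opN
  rw [map_smul, map_one]
  calc ‖M • (1 : Ed d →L[ℝ] Ed d)‖ ≤ ‖M‖ * ‖(1 : Ed d →L[ℝ] Ed d)‖ :=
        ContinuousLinearMap.opNorm_smul_le _ _
    _ ≤ M * 1 := by
        rw [Real.norm_eq_abs, abs_of_nonneg hM]
        gcongr
        exact ContinuousLinearMap.norm_id_le
    _ = M := mul_one M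

end QuadraticForm

lemma neg_le_of_quadForm_le_mul_norm_sq {d : ℕ} {K1 B M : ℝ}
    {G : Ed d → Matrix (Fin d) (Fin d) ℝ → ℝ}
    (hell : ∀ (p : Ed d) (Γ Γ' : Matrix (Fin d) (Fin d) ℝ), Γ.IsSymm → Γ'.IsSymm →
      (Γ - Γ').PosSemidef → G p Γ ≤ G p Γ')
    (hgrowth : ∀ (p : Ed d) (Γ : Matrix (Fin d) (Fin d) ℝ), Γ.IsSymm →
      |G p Γ| ≤ K1 * (1 + B + ‖p‖ + opN Γ))
    (hK1 : 0 ≤ K1) (p : Ed d) {Γ : Matrix (Fin d) (Fin d) ℝ} (hΓ : Γ.IsSymm) (hM : 0 ≤ M)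
    (hΓM : ∀ y, quadForm Γ y ≤ M * ‖y‖ ^ 2) :
    -G p Γ ≤ K1 * (1 + B + ‖p‖ + M) := by
  have hsymm : (M • (1 : Matrix (Fin d) (Fin d) ℝ)).IsSymm := Matrix.isSymm_one.smul M
  calc -G p Γ ≤ -G p (M • 1) := neg_le_neg (hell p _ Γ hsymm hΓ (posSemidef_smul_one_sub hΓ hΓM))
    _ ≤ |G p (M • 1)| := neg_le_abs _
    _ ≤ K1 * (1 + B + ‖p‖ + opN (M • (1 : Matrix (Fin d) (Fin d) ℝ))) := hgrowth p _ hsymm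
    _ ≤ K1 * (1 + B + ‖p‖ + M) := by gcongr; exact opN_smul_one_le hM

lemma exists_absorbing_dir_of_norm_le_quadForm {d : ℕ} {Γ : Matrix (Fin d) (Fin d) ℝ} {v p : Ed d}
    {K1 T s h : ℝ} (hK1 : 0 ≤ K1) (hT : 0 ≤ T) (hKT : 4 * K1 ≤ T ^ 2) (hv : ‖v‖ ≤ 1)
    (hp : ‖p‖ ≤ quadForm Γ v) (hs : 0 ≤ s) (hh : 0 ≤ h) :
    ∃ w : Ed d, ‖w‖ ≤ T ∧ h * K1 * (‖p‖ + quadForm Γ v) ≤ s * dotp w p + h / 2 * quadForm Γ w := by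
  obtain ⟨σ, hσ, hσp⟩ : ∃ σ : ℝ, |σ| = T ∧ 0 ≤ σ * dotp v p := by
    rcases le_total 0 (dotp v p) with hvp | hvp
    · exact ⟨T, abs_of_nonneg hT, mul_nonneg hT hvp⟩
    · exact ⟨-T, by rw [abs_neg, abs_of_nonneg hT], by nlinarith⟩
  refine ⟨σ • v, ?_, ?_⟩
  · rw [norm_smul, Real.norm_eq_abs, hσ]
    exact mul_le_of_le_one_right hT hv
  have hquad : quadForm Γ (σ • v) = T ^ 2 * quadForm Γ v := by rw [quadForm_smul, ← sq_abs, hσ]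
  have hlin : 0 ≤ s * dotp (σ • v) p := by rw [dotp_smul_left]; exact mul_nonneg hs hσp
  have hv0 : 0 ≤ quadForm Γ v := (norm_nonneg p).trans hp
  calc h * K1 * (‖p‖ + quadForm Γ v) ≤ h / 2 * (4 * K1) * quadForm Γ v := by
        nlinarith [mul_le_mul_of_nonneg_left hp (mul_nonneg hh hK1)]
    _ ≤ h / 2 * T ^ 2 * quadForm Γ v := by gcongr
    _ ≤ s * dotp (σ • v) p + h / 2 * quadForm Γ (σ • v) := by rw [hquad]; linarith

lemma exists_absorbing_dir_of_opN_le {d : ℕ} {Γ : Matrix (Fin d) (Fin d) ℝ} (p : Ed d)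
    {K1 K h : ℝ} (hK1 : 0 ≤ K1) (hΓ : opN Γ ≤ K) (hh : 0 ≤ h) :
    ∃ w : Ed d, ‖w‖ ≤ 4 * K1 * √h ∧
      4 * K1 * h * ‖p‖ - 8 * K1 ^ 2 * K * h ^ 2 ≤ √h * dotp w p + h / 2 * quadForm Γ w := by
  have hK : 0 ≤ K := (norm_nonneg _).trans hΓ
  have hsq : √h ^ 2 = h := Real.sq_sqrt hh
  rcases eq_or_ne p 0 with rfl | hp
  · refine ⟨0, by rw [norm_zero]; positivity, ?_⟩
    simp only [norm_zero, mul_zero, zero_sub, dotp, quadForm, PiLp.zero_apply,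
      Finset.sum_const_zero]
    linarith [show 0 ≤ 8 * K1 ^ 2 * K * h ^ 2 by positivity]
  have hpn : 0 < ‖p‖ := norm_pos_iff.2 hp
  set w : Ed d := (4 * K1 * √h / ‖p‖) • p
  have hw : ‖w‖ = 4 * K1 * √h := by
    rw [norm_smul, Real.norm_eq_abs, abs_of_nonneg (by positivity)]
    field_simp
  have hlin : √h * dotp w p = 4 * K1 * h * ‖p‖ := by
    rw [dotp_smul_left, dotp_self]
    field_simp
    rw [hsq, mul_comm]
  have hquad : -(8 * K1 ^ 2 * K * h ^ 2) ≤ h / 2 * quadForm Γ w := by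
    have habs := neg_le_of_abs_le (abs_quadForm_le Γ w)
    have hΓw : opN Γ * ‖w‖ ^ 2 ≤ K * (16 * K1 ^ 2 * h) := by
      calc opN Γ * ‖w‖ ^ 2 ≤ K * ‖w‖ ^ 2 := by gcongr
        _ = K * (16 * K1 ^ 2 * h) := by rw [hw, mul_pow, hsq]; ring
    nlinarith
  exact ⟨w, hw.le, by linarith⟩

lemma exists_mem_Xset_le {d : ℕ} {K1 K4 B δ κ h : ℝ} (hK1 : 0 ≤ K1) (hK4 : 0 ≤ K4) (hδ : δ ≤ 1)
    (hκ : 0 ≤ κ) (hh : h ∈ Ioc 0 1) (hhκ : 4 * K1 ≤ h ^ (-κ))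
    {G : Ed d → Matrix (Fin d) (Fin d) ℝ → ℝ}
    (hell : ∀ (p : Ed d) (Γ Γ' : Matrix (Fin d) (Fin d) ℝ), Γ.IsSymm → Γ'.IsSymm →
      (Γ - Γ').PosSemidef → G p Γ ≤ G p Γ')
    (hgrowth : ∀ (p : Ed d) (Γ : Matrix (Fin d) (Fin d) ℝ), Γ.IsSymm →
      |G p Γ| ≤ K1 * (1 + B + ‖p‖ + opN Γ))
    {ψ : Ed d → ℝ} (hψ : ∀ y : Ed d, |ψ y| ≤ B) (x : Ed d) {p : Ed d}
    {Γ : Matrix (Fin d) (Fin d) ℝ} (hpΓ : (p, Γ) ∈ Dset d K4 h δ) :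
    ∃ w ∈ Xset d h κ, ψ (x + √h • w) - √h * dotp w p - (h / 2) * quadForm Γ w - h * G p Γ
      ≤ (1 + K1 * h) * B + (K1 + 8 * K1 ^ 2 * K4) * h := by
  obtain ⟨hh0, hh1⟩ := hh
  obtain ⟨hΓ, -, hΓK⟩ : Γ.IsSymm ∧ _ ∧ opN Γ ≤ K4 * h ^ (-δ) := hpΓ
  obtain ⟨v, hv, hv0, hΓv⟩ := exists_quadForm_le_mul_norm_sq Γ
  have hG := mul_le_mul_of_nonneg_left
    (neg_le_of_quadForm_le_mul_norm_sq (B := B) hell hgrowth hK1 p hΓ hv0 hΓv) hh0.le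
  have hT1 : 1 ≤ h ^ (-κ) := Real.one_le_rpow_of_pos_of_le_one_of_nonpos hh0 hh1 (neg_nonpos.2 hκ)
  have hsqrt1 : √h ≤ 1 := Real.sqrt_le_one.2 hh1
  suffices ∃ w : Ed d, ‖w‖ ≤ h ^ (-κ) ∧ h * K1 * (‖p‖ + quadForm Γ v)
      ≤ √h * dotp w p + h / 2 * quadForm Γ w + 8 * K1 ^ 2 * K4 * h by
    obtain ⟨w, hw, hle⟩ := this
    refine ⟨w, hw, ?_⟩
    linarith [(abs_le.1 (hψ (x + √h • w))).2]
  rcases le_or_gt ‖p‖ (quadForm Γ v) with hp | hp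
  · obtain ⟨w, hw, hle⟩ := exists_absorbing_dir_of_norm_le_quadForm hK1 (zero_le_one.trans hT1)
      (by nlinarith) hv hp (Real.sqrt_nonneg h) hh0.le
    exact ⟨w, hw, by linarith [show 0 ≤ 8 * K1 ^ 2 * K4 * h by positivity]⟩
  · obtain ⟨w, hw, hle⟩ := exists_absorbing_dir_of_opN_le p hK1 hΓK hh0.le
    have hδh : h ^ (-δ) * h ≤ 1 := by
      rw [← Real.rpow_add_one hh0.ne']
      exact Real.rpow_le_one hh0.le hh1 (by linarith)
    refine ⟨w, hw.trans ?_, ?_⟩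
    · nlinarith
    · have hquad : 8 * K1 ^ 2 * (K4 * h ^ (-δ)) * h ^ 2 ≤ 8 * K1 ^ 2 * K4 * h := by
        have := mul_le_mul_of_nonneg_left hδh (by positivity : 0 ≤ 8 * K1 ^ 2 * K4 * h)
        linarith
      nlinarith [mul_le_mul_of_nonneg_left hp.le (mul_nonneg hh0.le hK1)]

lemma exists_forall_Ioc_le_rpow_neg {κ : ℝ} (hκ : 0 < κ) (c : ℝ) :
    ∃ h₀ ∈ Ioc (0 : ℝ) 1, ∀ h ∈ Ioc 0 h₀, c ≤ h ^ (-κ) := by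
  obtain ⟨u, hu, hsub⟩ := mem_nhdsGT_iff_exists_Ioc_subset.1
    ((tendsto_rpow_neg_nhdsGT_zero (neg_neg_of_pos hκ)).eventually_ge_atTop c)
  exact ⟨min u 1, ⟨lt_min hu one_pos, min_le_right _ _⟩,
    fun h hh => hsub ⟨hh.1, hh.2.trans (min_le_left _ _)⟩⟩

lemma Real.sInf_le_of_exists_le {s : Set ℝ} {b : ℝ} (hb : 0 ≤ b) (hs : ∃ x ∈ s, x ≤ b) :
    sInf s ≤ b := by
  by_cases hbdd : BddBelow s
  · obtain ⟨x, hx, hxb⟩ := hs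
    exact (csInf_le hbdd hx).trans hxb
  · rw [Real.sInf_of_not_bddBelow hbdd]
    exact hb

theorem stmt11_general (d : ℕ) (K1 K4 B δ κ : ℝ)
    (hK1 : 0 < K1) (hK4 : 0 < K4) (hB : 0 ≤ B)
    (hδ : δ ∈ Set.Ioo (0 : ℝ) (1 / 2)) (hκ : 0 < κ)
    (G : Ed d → Matrix (Fin d) (Fin d) ℝ → ℝ)
    (hell : ∀ (p : Ed d) (Γ Γ' : Matrix (Fin d) (Fin d) ℝ), Γ.IsSymm → Γ'.IsSymm →
      (Γ - Γ').PosSemidef → G p Γ ≤ G p Γ')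
    (hgrowth : ∀ (p : Ed d) (Γ : Matrix (Fin d) (Fin d) ℝ), Γ.IsSymm →
      |G p Γ| ≤ K1 * (1 + B + ‖p‖ + opN Γ))
    (ψ : Ed d → ℝ) (hψ : ∀ y : Ed d, |ψ y| ≤ B) :
    ∃ C > (0 : ℝ), ∃ h4 ∈ Set.Ioc (0 : ℝ) 1, ∀ h ∈ Set.Ioc (0 : ℝ) h4, ∀ x : Ed d,
      sSup {z | ∃ p Γ, (p, Γ) ∈ Dset d K4 h δ ∧
        z = sInf {u | ∃ w ∈ Xset d h κ, u =
          ψ (x + Real.sqrt h • w) - Real.sqrt h * dotp w p -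
            (h / 2) * quadForm Γ w - h * G p Γ}}
        ≤ (1 + K1 * h) * B + C * h := by
  obtain ⟨h4, hh4, hsmall⟩ := exists_forall_Ioc_le_rpow_neg hκ (4 * K1)
  refine ⟨K1 + 8 * K1 ^ 2 * K4, by positivity, h4, hh4, fun h hh x => ?_⟩
  have hh0 : 0 < h := hh.1
  refine Real.sSup_le ?_ (by positivity)
  rintro _ ⟨p, Γ, hpΓ, rfl⟩
  obtain ⟨w, hw, hle⟩ := exists_mem_Xset_le hK1.le hK4.le (hδ.2.le.trans (by norm_num)) hκ.le
    ⟨hh0, hh.2.trans hh4.2⟩ (hsmall h hh) hell hgrowth hψ x hpΓ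
  exact Real.sInf_le_of_exists_le (by positivity) ⟨_, ⟨w, hw, rfl⟩, hle⟩

/-- Upper bound for the max–min quantity `Q` (from the proof of
Lemma 3.12): `Q ≤ (1 + K₁h)B + Ch` for all sufficiently small `h`. -/
theorem stmt11 (d : ℕ) (hd : 1 ≤ d) (K1 K4 B δ κ γ : ℝ)
    (hK1 : 0 < K1) (hK4 : 0 < K4) (hB : 0 ≤ B)
    (hδ : δ ∈ Set.Ioo (0 : ℝ) (1 / 2)) (hκ : 0 < κ)
    (hγ : γ ∈ Set.Ioo (0 : ℝ) (2 * κ - δ))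
    (G : Ed d → Matrix (Fin d) (Fin d) ℝ → ℝ)
    (hell : ∀ (p : Ed d) (Γ Γ' : Matrix (Fin d) (Fin d) ℝ), Γ.IsSymm → Γ'.IsSymm →
      (Γ - Γ').PosSemidef → G p Γ ≤ G p Γ')
    (hgrowth : ∀ (p : Ed d) (Γ : Matrix (Fin d) (Fin d) ℝ), Γ.IsSymm →
      |G p Γ| ≤ K1 * (1 + B + ‖p‖ + opN Γ))
    (ψ : Ed d → ℝ) (hψ : ∀ y : Ed d, |ψ y| ≤ B) :
    ∃ C > (0 : ℝ), ∃ h4 ∈ Set.Ioc (0 : ℝ) 1, ∀ h ∈ Set.Ioc (0 : ℝ) h4, ∀ x : Ed d,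
      sSup {z | ∃ p Γ, (p, Γ) ∈ Dset d K4 h δ ∧
        z = sInf {u | ∃ w ∈ Xset d h κ, u =
          ψ (x + Real.sqrt h • w) - Real.sqrt h * dotp w p -
            (h / 2) * quadForm Γ w - h * G p Γ}}
        ≤ (1 + K1 * h) * B + C * h :=
  stmt11_general d K1 K4 B δ κ hK1 hK4 hB hδ hκ G hell hgrowth ψ hψ
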